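/- Let γ, T₁, T₃ > 0 and let g : ℝ × ℝ → ℝ be a smooth function with g ≥ 1. On the open set D = {(I₁,I₂,I₃,θ₁,θ₃) ∈ ℝ⁵ : I₁ > 0, I₂ > 0, I₃ > 0}, define the smooth vector fields v₀,…,v₄ : D → ℝ⁵ by v₀ = (2I₁I₂(sin θ₁ − γ) + γ(T₁ − I₁³) + γT₁/8, −2I₂(I₁ sin θ₁ + I₃ sin θ₃), 2I₂I₃(sin θ₃ − γ) + γ(T₃ − I₃³) + γT₃/8, (I₂ − I₁)(1 + 2 cos θ₁) − 2I₃ cos θ₃ + (γT₁/2) g_θ(I₂,θ₁) g(I₂,θ₁), (I₂ − I₃)(1 + 2 cos θ₃) − 2I₁ cos θ₁ + (γT₃/2) g_θ(I₂,θ₃) g(I₂,θ₃)), v₁ = (√(γT₁I₁/2), 0, 0, 0, 0), v₂ = (0, 0, √(γT₃I₃/2), 0, 0), v₃ = (0, 0, 0, √(γT₁) g(I₂,θ₁), 0), v₄ = (0, 0, 0, 0, √(γT₃) g(I₂,θ₃)), and let v₅ = [v₀, v₁] and v₆ = [v₅, v₃], where the Lie bracket of smooth vector fields V, W on D is [V,W](x)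 = DV(x)·W(x) − DW(x)·V(x) (DV the Jacobian). Then for every x ∈ D the six vectors v₁(x), v₂(x), v₃(x), v₄(x), v₅(x), v₆(x) span ℝ⁵. -/

import Mathlib

open Real

/-- The state space `ℝ⁵` with coordinates `(I₁, I₂, I₃, θ₁, θ₃)`. -/
abbrev E5 : Type := ℝ × ℝ × ℝ × ℝ × ℝ

/-- The Lie bracket `[V,W](x) = DV(x)·W(x) − DW(x)·V(x)` of vector fields on `ℝ⁵`. -/
noncomputable def lieBracket (V W : E5 → E5) (x : E5) : E5 :=
  fderiv ℝ V x (W x) - fderiv ℝ W x (V x)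

/-- Stratonovich drift vector field `v₀`. -/
noncomputable def v0 (γ T₁ T₃ : ℝ) (g : ℝ → ℝ → ℝ) (x : E5) : E5 :=
  (2 * x.1 * x.2.1 * (Real.sin x.2.2.2.1 - γ) + γ * (T₁ - x.1 ^ 3) + γ * T₁ / 8,
   -2 * x.2.1 * (x.1 * Real.sin x.2.2.2.1 + x.2.2.1 * Real.sin x.2.2.2.2),
   2 * x.2.1 * x.2.2.1 * (Real.sin x.2.2.2.2 - γ) + γ * (T₃ - x.2.2.1 ^ 3) + γ * T₃ / 8,
   (x.2.1 - x.1) * (1 + 2 * Real.cos x.2.2.2.1) - 2 * x.2.2.1 * Real.cos x.2.2.2.2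
     + γ * T₁ / 2 * deriv (g x.2.1) x.2.2.2.1 * g x.2.1 x.2.2.2.1,
   (x.2.1 - x.2.2.1) * (1 + 2 * Real.cos x.2.2.2.2) - 2 * x.1 * Real.cos x.2.2.2.1
     + γ * T₃ / 2 * deriv (g x.2.1) x.2.2.2.2 * g x.2.1 x.2.2.2.2)

/-- Diffusion vector field `v₁`. -/
noncomputable def v1 (γ T₁ : ℝ) (x : E5) : E5 :=
  (Real.sqrt (γ * T₁ * x.1 / 2), 0, 0, 0, 0)

/-- Diffusion vector field `v₂`. -/
noncomputable def v2 (γ T₃ : ℝ) (x : E5) : E5 :=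
  (0, 0, Real.sqrt (γ * T₃ * x.2.2.1 / 2), 0, 0)

/-- Diffusion vector field `v₃`. -/
noncomputable def v3 (γ T₁ : ℝ) (g : ℝ → ℝ → ℝ) (x : E5) : E5 :=
  (0, 0, 0, Real.sqrt (γ * T₁) * g x.2.1 x.2.2.2.1, 0)

/-- Diffusion vector field `v₄`. -/
noncomputable def v4 (γ T₃ : ℝ) (g : ℝ → ℝ → ℝ) (x : E5) : E5 :=
  (0, 0, 0, 0, Real.sqrt (γ * T₃) * g x.2.1 x.2.2.2.2)

/-- `v₅ = [v₀, v₁]`. -/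
noncomputable def v5 (γ T₁ T₃ : ℝ) (g : ℝ → ℝ → ℝ) (x : E5) : E5 :=
  lieBracket (v0 γ T₁ T₃ g) (v1 γ T₁) x

/-- `v₆ = [v₅, v₃]`. -/
noncomputable def v6 (γ T₁ T₃ : ℝ) (g : ℝ → ℝ → ℝ) (x : E5) : E5 :=
  lieBracket (v5 γ T₁ T₃ g) (v3 γ T₁ g) x

/-! ### Auxiliary definitions and lemmas -/

/-- Explicit formula for `v₅ = [v₀, v₁]` on `{I₁ > 0}`. -/
noncomputable def V5aux (γ T₁ : ℝ) (x : E5) : E5 :=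
  ((2 * Real.sqrt (γ * T₁ * x.1 / 2) * x.2.1 * (Real.sin x.2.2.2.1 - γ)
      - 3 * γ * x.1 ^ 2 * Real.sqrt (γ * T₁ * x.1 / 2))
    - γ * T₁ * (2 * x.1 * x.2.1 * (Real.sin x.2.2.2.1 - γ) + γ * (T₁ - x.1 ^ 3) + γ * T₁ / 8)
      / (4 * Real.sqrt (γ * T₁ * x.1 / 2)),
   -2 * x.2.1 * Real.sqrt (γ * T₁ * x.1 / 2) * Real.sin x.2.2.2.1,
   0,
   -Real.sqrt (γ * T₁ * x.1 / 2) * (1 + 2 * Real.cos x.2.2.2.1),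
   -2 * Real.sqrt (γ * T₁ * x.1 / 2) * Real.cos x.2.2.2.1)

lemma dirDeriv {F : Type*} [NormedAddCommGroup F] [NormedSpace ℝ F]
    (f : E5 → F) (x v : E5) (hf : DifferentiableAt ℝ f x) {D : F}
    (hD : HasDerivAt (fun t : ℝ => f (x + t • v)) D 0) : fderiv ℝ f x v = D := by
  have hline : HasDerivAt (fun t : ℝ => x + t • v) v 0 := by
    simpa using ((hasDerivAt_id (0:ℝ)).smul_const v).const_add x
  have h0 : x + (0:ℝ) • v = x := by simp
  have hf' := hf.hasFDerivAt
  rw [← h0] at hf'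
  have h := hf'.comp_hasDerivAt 0 hline
  rw [← h0]
  exact h.unique hD

lemma hasDerivAt_cubic (A B C D : ℝ) :
    HasDerivAt (fun t : ℝ => A + B*t + C*t^2 + D*t^3) B 0 := by
  have h := (((hasDerivAt_const (0:ℝ) A).add ((hasDerivAt_id (0:ℝ)).const_mul B)).add
      ((hasDerivAt_pow 2 (0:ℝ)).const_mul C)).add ((hasDerivAt_pow 3 (0:ℝ)).const_mul D)
  exact h.congr_deriv (by simp)

lemma sqrt_affine (A B : ℝ) (hA : A ≠ 0) :
    HasDerivAt (fun t : ℝ => Real.sqrt (A + t*B)) (B/(2*Real.sqrt A)) 0 := by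
  have h : HasDerivAt (fun t : ℝ => A + t*B) B 0 := by
    simpa using ((hasDerivAt_id (0:ℝ)).mul_const B).const_add A
  simpa using h.sqrt (by simpa using hA)

lemma sin_affine (A B : ℝ) :
    HasDerivAt (fun t : ℝ => Real.sin (A + t*B)) (B * Real.cos A) 0 := by
  have h : HasDerivAt (fun t : ℝ => A + t*B) B 0 := by
    simpa using ((hasDerivAt_id (0:ℝ)).mul_const B).const_add A
  simpa [mul_comm] using h.sin

lemma proj2_fderiv (f : E5 → E5) (x w : E5) (hf : DifferentiableAt ℝ f x) :
    (fderiv ℝ f x w).2.1 = fderiv ℝ (fun y => (f y).2.1) x w := by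
  set p2 : E5 →L[ℝ] ℝ :=
    (ContinuousLinearMap.fst ℝ ℝ (ℝ×ℝ×ℝ)).comp (ContinuousLinearMap.snd ℝ ℝ (ℝ×ℝ×ℝ×ℝ)) with hp2
  have h := (p2.hasFDerivAt (x := f x)).comp x hf.hasFDerivAt
  have h2 : fderiv ℝ (fun y => (f y).2.1) x = p2.comp (fderiv ℝ f x) := h.fderiv
  rw [h2]; rfl

lemma gth_diff (g : ℝ → ℝ → ℝ) (hg : ContDiff ℝ (⊤ : ℕ∞) (fun p : ℝ × ℝ => g p.1 p.2)) :
    Differentiable ℝ (fun p : ℝ × ℝ => deriv (g p.1) p.2) := by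
  set G : ℝ × ℝ → ℝ := fun p => g p.1 p.2 with hGdef
  have h1 : ContDiff ℝ (⊤ : ℕ∞) (fderiv ℝ G) := hg.fderiv_right (by simp)
  have h2 : Differentiable ℝ (fun p : ℝ × ℝ => fderiv ℝ G p ((0:ℝ),(1:ℝ))) :=
    (ContinuousLinearMap.apply ℝ ℝ ((0:ℝ),(1:ℝ))).differentiable.comp (h1.differentiable (by simp))
  have key : ∀ p : ℝ × ℝ, deriv (g p.1) p.2 = fderiv ℝ G p ((0:ℝ),(1:ℝ)) := by
    intro p
    have hline : HasDerivAt (fun t : ℝ => ((p.1, t) : ℝ × ℝ)) ((0:ℝ),(1:ℝ)) p.2 :=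
      (hasDerivAt_const p.2 p.1).prodMk (hasDerivAt_id p.2)
    have hd := ((hg.differentiable (by simp)) (p.1, p.2)).hasFDerivAt.comp_hasDerivAt p.2 hline
    exact hd.deriv
  simpa only [key] using h2

lemma v0_diffAt (γ T₁ T₃ : ℝ) (G gth : ℝ × ℝ → ℝ)
    (hG : Differentiable ℝ G) (hgth : Differentiable ℝ gth) (x : E5) :
    DifferentiableAt ℝ (fun x : E5 =>
    ((2 * x.1 * x.2.1 * (Real.sin x.2.2.2.1 - γ) + γ * (T₁ - x.1 ^ 3) + γ * T₁ / 8,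
   -2 * x.2.1 * (x.1 * Real.sin x.2.2.2.1 + x.2.2.1 * Real.sin x.2.2.2.2),
   2 * x.2.1 * x.2.2.1 * (Real.sin x.2.2.2.2 - γ) + γ * (T₃ - x.2.2.1 ^ 3) + γ * T₃ / 8,
   (x.2.1 - x.1) * (1 + 2 * Real.cos x.2.2.2.1) - 2 * x.2.2.1 * Real.cos x.2.2.2.2
     + γ * T₁ / 2 * gth (x.2.1, x.2.2.2.1) * G (x.2.1, x.2.2.2.1),
   (x.2.1 - x.2.2.1) * (1 + 2 * Real.cos x.2.2.2.2) - 2 * x.1 * Real.cos x.2.2.2.1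
     + γ * T₃ / 2 * gth (x.2.1, x.2.2.2.2) * G (x.2.1, x.2.2.2.2)) : E5)) x := by
  fun_prop

lemma sqrtpos (γ T₁ : ℝ) (hγ : 0 < γ) (hT₁ : 0 < T₁) {z : ℝ} (hz : 0 < z) :
    0 < Real.sqrt (γ * T₁ * z / 2) :=
  Real.sqrt_pos.2 (by positivity)

lemma v5_eq (γ T₁ T₃ : ℝ) (hγ : 0 < γ) (hT₁ : 0 < T₁) (g : ℝ → ℝ → ℝ)
    (hG : Differentiable ℝ (fun p : ℝ × ℝ => g p.1 p.2))
    (hgth : Differentiable ℝ (fun p : ℝ × ℝ => deriv (g p.1) p.2))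
    (x : E5) (hx : 0 < x.1) :
    v5 γ T₁ T₃ g x = V5aux γ T₁ x := by
  have ha : 0 < Real.sqrt (γ * T₁ * x.1 / 2) := sqrtpos γ T₁ hγ hT₁ hx
  have hA : 0 < γ * T₁ * x.1 / 2 := by positivity
  -- differentiability of v0
  have hd0 : DifferentiableAt ℝ (v0 γ T₁ T₃ g) x :=
    v0_diffAt γ T₁ T₃ (fun p : ℝ × ℝ => g p.1 p.2) (fun p : ℝ × ℝ => deriv (g p.1) p.2)
      hG hgth x
  -- differentiability of v1
  have hs : DifferentiableAt ℝ (fun y : E5 => Real.sqrt (γ * T₁ * y.1 / 2)) x :=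
    DifferentiableAt.sqrt (by fun_prop) hA.ne'
  have hd1 : DifferentiableAt ℝ (v1 γ T₁) x := hs.prodMk (differentiableAt_const _)
  -- fderiv of v0 in direction v1 x
  have hfd1 : fderiv ℝ (v0 γ T₁ T₃ g) x (v1 γ T₁ x) =
      ((2 * Real.sqrt (γ * T₁ * x.1 / 2) * x.2.1 * (Real.sin x.2.2.2.1 - γ)
          - 3 * γ * x.1 ^ 2 * Real.sqrt (γ * T₁ * x.1 / 2),
        -2 * x.2.1 * Real.sqrt (γ * T₁ * x.1 / 2) * Real.sin x.2.2.2.1,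
        0,
        -Real.sqrt (γ * T₁ * x.1 / 2) * (1 + 2 * Real.cos x.2.2.2.1),
        -2 * Real.sqrt (γ * T₁ * x.1 / 2) * Real.cos x.2.2.2.1) : E5) := by
    refine dirDeriv _ _ _ hd0 ?_
    have hx0 : (fun t : ℝ => v0 γ T₁ T₃ g (x + t • v1 γ T₁ x)) = fun t : ℝ =>
        (((2 * x.1 * x.2.1 * (Real.sin x.2.2.2.1 - γ) + γ * (T₁ - x.1 ^ 3) + γ * T₁ / 8)
            + (2 * Real.sqrt (γ * T₁ * x.1 / 2) * x.2.1 * (Real.sin x.2.2.2.1 - γ)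
               - 3 * γ * x.1 ^ 2 * Real.sqrt (γ * T₁ * x.1 / 2)) * t
            + (-3 * γ * x.1 * Real.sqrt (γ * T₁ * x.1 / 2) ^ 2) * t ^ 2
            + (-γ * Real.sqrt (γ * T₁ * x.1 / 2) ^ 3) * t ^ 3,
          (-2 * x.2.1 * (x.1 * Real.sin x.2.2.2.1 + x.2.2.1 * Real.sin x.2.2.2.2))
            + (-2 * x.2.1 * Real.sqrt (γ * T₁ * x.1 / 2) * Real.sin x.2.2.2.1) * t
            + (0:ℝ) * t ^ 2 + (0:ℝ) * t ^ 3,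
          (2 * x.2.1 * x.2.2.1 * (Real.sin x.2.2.2.2 - γ) + γ * (T₃ - x.2.2.1 ^ 3) + γ * T₃ / 8)
            + (0:ℝ) * t + (0:ℝ) * t ^ 2 + (0:ℝ) * t ^ 3,
          ((x.2.1 - x.1) * (1 + 2 * Real.cos x.2.2.2.1) - 2 * x.2.2.1 * Real.cos x.2.2.2.2
            + γ * T₁ / 2 * deriv (g x.2.1) x.2.2.2.1 * g x.2.1 x.2.2.2.1)
            + (-Real.sqrt (γ * T₁ * x.1 / 2) * (1 + 2 * Real.cos x.2.2.2.1)) * t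
            + (0:ℝ) * t ^ 2 + (0:ℝ) * t ^ 3,
          ((x.2.1 - x.2.2.1) * (1 + 2 * Real.cos x.2.2.2.2) - 2 * x.1 * Real.cos x.2.2.2.1
            + γ * T₃ / 2 * deriv (g x.2.1) x.2.2.2.2 * g x.2.1 x.2.2.2.2)
            + (-2 * Real.sqrt (γ * T₁ * x.1 / 2) * Real.cos x.2.2.2.1) * t
            + (0:ℝ) * t ^ 2 + (0:ℝ) * t ^ 3) : E5) := by
      funext t
      simp only [v0, v1, Prod.smul_mk, smul_eq_mul, mul_zero, Prod.fst_add, Prod.snd_add,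
        add_zero, Prod.mk.injEq]
      refine ⟨by ring, by ring, by ring, by ring, by ring⟩
    rw [hx0]
    exact (hasDerivAt_cubic _ _ _ _).prodMk ((hasDerivAt_cubic _ _ _ _).prodMk
      ((hasDerivAt_cubic _ _ _ _).prodMk ((hasDerivAt_cubic _ _ _ _).prodMk
        (hasDerivAt_cubic _ _ _ _))))
  -- fderiv of v1 in direction v0 x
  have hfd2 : fderiv ℝ (v1 γ T₁) x (v0 γ T₁ T₃ g x) =
      ((γ * T₁ * (2 * x.1 * x.2.1 * (Real.sin x.2.2.2.1 - γ) + γ * (T₁ - x.1 ^ 3) + γ * T₁ / 8)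
          / 2 / (2 * Real.sqrt (γ * T₁ * x.1 / 2)), 0, 0, 0, 0) : E5) := by
    refine dirDeriv _ _ _ hd1 ?_
    have hx1 : (fun t : ℝ => v1 γ T₁ (x + t • v0 γ T₁ T₃ g x)) = fun t : ℝ =>
        ((Real.sqrt (γ * T₁ * x.1 / 2
            + t * (γ * T₁ * (2 * x.1 * x.2.1 * (Real.sin x.2.2.2.1 - γ)
                + γ * (T₁ - x.1 ^ 3) + γ * T₁ / 8) / 2)), 0, 0, 0, 0) : E5) := by
      funext t
      simp only [v1, Prod.fst_add, Prod.smul_fst, smul_eq_mul, Prod.mk.injEq]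
      refine ⟨?_, trivial⟩
      congr 1
      simp only [v0]
      ring
    rw [hx1]
    exact (sqrt_affine _ _ hA.ne').prodMk (hasDerivAt_const _ _)
  have hane : Real.sqrt (γ * T₁ * x.1 / 2) ≠ 0 := ha.ne'
  show fderiv ℝ (v0 γ T₁ T₃ g) x (v1 γ T₁ x) - fderiv ℝ (v1 γ T₁) x (v0 γ T₁ T₃ g x)
      = V5aux γ T₁ x
  rw [hfd1, hfd2]
  simp only [V5aux, Prod.mk_sub_mk, Prod.mk.injEq]
  refine ⟨by field_simp; ring, by ring, by ring, by ring, by ring⟩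

lemma V5aux_diffAt (γ T₁ : ℝ) (hγ : 0 < γ) (hT₁ : 0 < T₁) (x : E5) (hx : 0 < x.1) :
    DifferentiableAt ℝ (V5aux γ T₁) x := by
  have hA : 0 < γ * T₁ * x.1 / 2 := by positivity
  have ha : 0 < Real.sqrt (γ * T₁ * x.1 / 2) := Real.sqrt_pos.2 hA
  have hs : DifferentiableAt ℝ (fun y : E5 => Real.sqrt (γ * T₁ * y.1 / 2)) x :=
    DifferentiableAt.sqrt (by fun_prop) hA.ne'
  have h1 : DifferentiableAt ℝ (fun y : E5 =>
      (2 * Real.sqrt (γ * T₁ * y.1 / 2) * y.2.1 * (Real.sin y.2.2.2.1 - γ)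
        - 3 * γ * y.1 ^ 2 * Real.sqrt (γ * T₁ * y.1 / 2))
      - γ * T₁ * (2 * y.1 * y.2.1 * (Real.sin y.2.2.2.1 - γ) + γ * (T₁ - y.1 ^ 3) + γ * T₁ / 8)
        / (4 * Real.sqrt (γ * T₁ * y.1 / 2))) x := by
    have hnum : DifferentiableAt ℝ (fun y : E5 =>
        γ * T₁ * (2 * y.1 * y.2.1 * (Real.sin y.2.2.2.1 - γ) + γ * (T₁ - y.1 ^ 3) + γ * T₁ / 8)) x := by
      fun_prop
    have hden : DifferentiableAt ℝ (fun y : E5 => 4 * Real.sqrt (γ * T₁ * y.1 / 2)) x :=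
      hs.const_mul 4
    have hne : (4:ℝ) * Real.sqrt (γ * T₁ * x.1 / 2) ≠ 0 := by positivity
    have hdiv : DifferentiableAt ℝ (fun y : E5 =>
        γ * T₁ * (2 * y.1 * y.2.1 * (Real.sin y.2.2.2.1 - γ) + γ * (T₁ - y.1 ^ 3) + γ * T₁ / 8)
          * (4 * Real.sqrt (γ * T₁ * y.1 / 2))⁻¹) x := hnum.mul (hden.inv hne)
    have hm1 : DifferentiableAt ℝ (fun y : E5 =>
        2 * Real.sqrt (γ * T₁ * y.1 / 2) * y.2.1 * (Real.sin y.2.2.2.1 - γ)) x :=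
      ((hs.const_mul 2).mul differentiableAt_snd.fst).mul (by fun_prop)
    have hm2 : DifferentiableAt ℝ (fun y : E5 => 3 * γ * y.1 ^ 2 * Real.sqrt (γ * T₁ * y.1 / 2)) x :=
      DifferentiableAt.mul (by fun_prop) hs
    simp only [div_eq_mul_inv]
    exact (hm1.sub hm2).sub hdiv
  have h2 : DifferentiableAt ℝ (fun y : E5 =>
      -2 * y.2.1 * Real.sqrt (γ * T₁ * y.1 / 2) * Real.sin y.2.2.2.1) x :=
    (((differentiableAt_snd.fst.const_mul (-2)).mul hs).mul (by fun_prop))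
  have h4 : DifferentiableAt ℝ (fun y : E5 =>
      -Real.sqrt (γ * T₁ * y.1 / 2) * (1 + 2 * Real.cos y.2.2.2.1)) x :=
    hs.neg.mul (by fun_prop)
  have h5 : DifferentiableAt ℝ (fun y : E5 =>
      -2 * Real.sqrt (γ * T₁ * y.1 / 2) * Real.cos y.2.2.2.1) x :=
    ((hs.const_mul (-2)).mul (by fun_prop))
  exact h1.prodMk (h2.prodMk ((differentiableAt_const 0).prodMk (h4.prodMk h5)))

lemma v6_comp2 (γ T₁ T₃ : ℝ) (hγ : 0 < γ) (hT₁ : 0 < T₁) (g : ℝ → ℝ → ℝ)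
    (hG : Differentiable ℝ (fun p : ℝ × ℝ => g p.1 p.2))
    (hgth : Differentiable ℝ (fun p : ℝ × ℝ => deriv (g p.1) p.2))
    (x : E5) (hx : 0 < x.1) :
    (v6 γ T₁ T₃ g x).2.1 = -2 * Real.sqrt (γ * T₁ * x.1 / 2) * x.2.1
      * (Real.sqrt (γ * T₁) * g x.2.1 x.2.2.2.1 * Real.cos x.2.2.2.1) := by
  have hA : 0 < γ * T₁ * x.1 / 2 := by positivity
  have ha : 0 < Real.sqrt (γ * T₁ * x.1 / 2) := Real.sqrt_pos.2 hA
  have hopen : IsOpen {y : E5 | 0 < y.1} := isOpen_lt continuous_const continuous_fst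
  have hEq : v5 γ T₁ T₃ g =ᶠ[nhds x] V5aux γ T₁ := by
    filter_upwards [hopen.mem_nhds hx] with y hy
    exact v5_eq γ T₁ T₃ hγ hT₁ g hG hgth y hy
  have hdV5 : DifferentiableAt ℝ (V5aux γ T₁) x := V5aux_diffAt γ T₁ hγ hT₁ x hx
  have hdv3 : DifferentiableAt ℝ (v3 γ T₁ g) x := by
    have h4 : DifferentiableAt ℝ (fun y : E5 => Real.sqrt (γ * T₁) * g y.2.1 y.2.2.2.1) x := by
      have hc := (hG.differentiableAt
          (x := ((x.2.1, x.2.2.2.1) : ℝ × ℝ))).comp x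
          (by fun_prop : DifferentiableAt ℝ (fun y : E5 => ((y.2.1, y.2.2.2.1) : ℝ × ℝ)) x)
      exact hc.const_mul _
    exact (differentiableAt_const 0).prodMk ((differentiableAt_const 0).prodMk
      ((differentiableAt_const 0).prodMk (h4.prodMk (differentiableAt_const 0))))
  have hterm2 : (fderiv ℝ (v3 γ T₁ g) x (v5 γ T₁ T₃ g x)).2.1 = 0 := by
    rw [proj2_fderiv _ _ _ hdv3]
    rw [show (fun y : E5 => (v3 γ T₁ g y).2.1) = fun _ : E5 => (0:ℝ) from rfl, fderiv_fun_const]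
    simp
  have hterm1 : (fderiv ℝ (v5 γ T₁ T₃ g) x (v3 γ T₁ g x)).2.1
      = -2 * Real.sqrt (γ * T₁ * x.1 / 2) * x.2.1
        * (Real.sqrt (γ * T₁) * g x.2.1 x.2.2.2.1 * Real.cos x.2.2.2.1) := by
    rw [hEq.fderiv_eq, proj2_fderiv _ _ _ hdV5]
    have hd2 : DifferentiableAt ℝ (fun y : E5 => (V5aux γ T₁ y).2.1) x := by
      have hs : DifferentiableAt ℝ (fun y : E5 => Real.sqrt (γ * T₁ * y.1 / 2)) x :=
        DifferentiableAt.sqrt (by fun_prop) hA.ne'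
      exact (((differentiableAt_snd.fst.const_mul (-2)).mul hs).mul (by fun_prop))
    have hline : HasDerivAt (fun t : ℝ => (V5aux γ T₁ (x + t • v3 γ T₁ g x)).2.1)
        (-2 * x.2.1 * Real.sqrt (γ * T₁ * x.1 / 2)
          * (Real.sqrt (γ * T₁) * g x.2.1 x.2.2.2.1 * Real.cos x.2.2.2.1)) 0 := by
      have hfun : (fun t : ℝ => (V5aux γ T₁ (x + t • v3 γ T₁ g x)).2.1)
          = fun t : ℝ => -2 * x.2.1 * Real.sqrt (γ * T₁ * x.1 / 2)
              * Real.sin (x.2.2.2.1 + t * (Real.sqrt (γ * T₁) * g x.2.1 x.2.2.2.1)) := by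
        funext t
        simp only [V5aux, v3, Prod.smul_mk, smul_eq_mul, mul_zero, Prod.fst_add, Prod.snd_add,
          add_zero]
      rw [hfun]
      exact (sin_affine _ _).const_mul _
    rw [dirDeriv _ _ _ hd2 hline]
    ring
  show (fderiv ℝ (v5 γ T₁ T₃ g) x (v3 γ T₁ g x)
      - fderiv ℝ (v3 γ T₁ g) x (v5 γ T₁ T₃ g x)).2.1
      = _
  rw [Prod.snd_sub, Prod.fst_sub, hterm1, hterm2]
  ring

lemma span_top_of_basis (s : Submodule ℝ E5)
    (h1 : (((1:ℝ),(0:ℝ),(0:ℝ),(0:ℝ),(0:ℝ)) : E5) ∈ s)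
    (h2 : (((0:ℝ),(1:ℝ),(0:ℝ),(0:ℝ),(0:ℝ)) : E5) ∈ s)
    (h3 : (((0:ℝ),(0:ℝ),(1:ℝ),(0:ℝ),(0:ℝ)) : E5) ∈ s)
    (h4 : (((0:ℝ),(0:ℝ),(0:ℝ),(1:ℝ),(0:ℝ)) : E5) ∈ s)
    (h5 : (((0:ℝ),(0:ℝ),(0:ℝ),(0:ℝ),(1:ℝ)) : E5) ∈ s) : s = ⊤ := by
  rw [eq_top_iff]
  rintro ⟨p, q, r, u, v⟩ -
  have h : ((p, q, r, u, v) : E5)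
      = p • (((1:ℝ),(0:ℝ),(0:ℝ),(0:ℝ),(0:ℝ)) : E5)
      + q • (((0:ℝ),(1:ℝ),(0:ℝ),(0:ℝ),(0:ℝ)) : E5)
      + r • (((0:ℝ),(0:ℝ),(1:ℝ),(0:ℝ),(0:ℝ)) : E5)
      + u • (((0:ℝ),(0:ℝ),(0:ℝ),(1:ℝ),(0:ℝ)) : E5)
      + v • (((0:ℝ),(0:ℝ),(0:ℝ),(0:ℝ),(1:ℝ)) : E5) := by
    simp [Prod.smul_mk, Prod.mk_add_mk]
  rw [h]
  exact add_mem (add_mem (add_mem (add_mem (s.smul_mem p h1) (s.smul_mem q h2))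
    (s.smul_mem r h3)) (s.smul_mem u h4)) (s.smul_mem v h5)

lemma e2_of_mem (s : Submodule ℝ E5) (w : E5) (hw : w ∈ s) (hq : w.2.1 ≠ 0)
    (h1 : (((1:ℝ),(0:ℝ),(0:ℝ),(0:ℝ),(0:ℝ)) : E5) ∈ s)
    (h3 : (((0:ℝ),(0:ℝ),(1:ℝ),(0:ℝ),(0:ℝ)) : E5) ∈ s)
    (h4 : (((0:ℝ),(0:ℝ),(0:ℝ),(1:ℝ),(0:ℝ)) : E5) ∈ s)
    (h5 : (((0:ℝ),(0:ℝ),(0:ℝ),(0:ℝ),(1:ℝ)) : E5) ∈ s) :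
    (((0:ℝ),(1:ℝ),(0:ℝ),(0:ℝ),(0:ℝ)) : E5) ∈ s := by
  have hmem : w.2.1⁻¹ • (w - w.1 • (((1:ℝ),(0:ℝ),(0:ℝ),(0:ℝ),(0:ℝ)) : E5)
      - w.2.2.1 • (((0:ℝ),(0:ℝ),(1:ℝ),(0:ℝ),(0:ℝ)) : E5)
      - w.2.2.2.1 • (((0:ℝ),(0:ℝ),(0:ℝ),(1:ℝ),(0:ℝ)) : E5)
      - w.2.2.2.2 • (((0:ℝ),(0:ℝ),(0:ℝ),(0:ℝ),(1:ℝ)) : E5)) ∈ s :=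
    s.smul_mem _ (s.sub_mem (s.sub_mem (s.sub_mem (s.sub_mem hw (s.smul_mem _ h1))
      (s.smul_mem _ h3)) (s.smul_mem _ h4)) (s.smul_mem _ h5))
  obtain ⟨p, q, r, u, v⟩ := w
  simp only at hq
  have heq : (((p,q,r,u,v) : E5).2.1⁻¹ • (((p,q,r,u,v) : E5)
      - ((p,q,r,u,v) : E5).1 • (((1:ℝ),(0:ℝ),(0:ℝ),(0:ℝ),(0:ℝ)) : E5)
      - ((p,q,r,u,v) : E5).2.2.1 • (((0:ℝ),(0:ℝ),(1:ℝ),(0:ℝ),(0:ℝ)) : E5)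
      - ((p,q,r,u,v) : E5).2.2.2.1 • (((0:ℝ),(0:ℝ),(0:ℝ),(1:ℝ),(0:ℝ)) : E5)
      - ((p,q,r,u,v) : E5).2.2.2.2 • (((0:ℝ),(0:ℝ),(0:ℝ),(0:ℝ),(1:ℝ)) : E5)))
      = (((0:ℝ),(1:ℝ),(0:ℝ),(0:ℝ),(0:ℝ)) : E5) := by
    simp only [Prod.smul_mk, Prod.mk_sub_mk, smul_eq_mul, mul_one, mul_zero, sub_zero]
    simp only [Prod.mk.injEq]
    refine ⟨by ring, by field_simp, by ring, by ring, by ring⟩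
  rw [heq] at hmem
  exact hmem

/-- Lemma 6.2, Hörmander condition: on the set
`{I₁ > 0, I₂ > 0, I₃ > 0}`, the vectors `v₁(x),…,v₆(x)` span `ℝ⁵`. -/
theorem hormander_condition (γ T₁ T₃ : ℝ) (hγ : 0 < γ) (hT₁ : 0 < T₁) (hT₃ : 0 < T₃)
    (g : ℝ → ℝ → ℝ)
    (hg : ContDiff ℝ (⊤ : ℕ∞) (fun p : ℝ × ℝ => g p.1 p.2))
    (hg1 : ∀ I θ, 1 ≤ g I θ) :
    ∀ x : E5, 0 < x.1 → 0 < x.2.1 → 0 < x.2.2.1 →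
      Submodule.span ℝ
        ({v1 γ T₁ x, v2 γ T₃ x, v3 γ T₁ g x, v4 γ T₃ g x,
          v5 γ T₁ T₃ g x, v6 γ T₁ T₃ g x} : Set E5) = ⊤ := by
  intro x hx1 hx2 hx3
  have hG : Differentiable ℝ (fun p : ℝ × ℝ => g p.1 p.2) := hg.differentiable (by simp)
  have hgth : Differentiable ℝ (fun p : ℝ × ℝ => deriv (g p.1) p.2) := gth_diff g hg
  have hA1 : 0 < γ * T₁ * x.1 / 2 := by positivity
  have ha : 0 < Real.sqrt (γ * T₁ * x.1 / 2) := Real.sqrt_pos.2 hA1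
  have hb : 0 < Real.sqrt (γ * T₃ * x.2.2.1 / 2) := Real.sqrt_pos.2 (by positivity)
  have hsg1 : 0 < Real.sqrt (γ * T₁) := Real.sqrt_pos.2 (by positivity)
  have hsg3 : 0 < Real.sqrt (γ * T₃) := Real.sqrt_pos.2 (by positivity)
  have hgpos1 : 0 < g x.2.1 x.2.2.2.1 := lt_of_lt_of_le one_pos (hg1 _ _)
  have hgpos3 : 0 < g x.2.1 x.2.2.2.2 := lt_of_lt_of_le one_pos (hg1 _ _)
  set S := Submodule.span ℝ
        ({v1 γ T₁ x, v2 γ T₃ x, v3 γ T₁ g x, v4 γ T₃ g x,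
          v5 γ T₁ T₃ g x, v6 γ T₁ T₃ g x} : Set E5) with hS
  have hm1 : v1 γ T₁ x ∈ S := Submodule.subset_span (Set.mem_insert _ _)
  have hm2 : v2 γ T₃ x ∈ S := Submodule.subset_span
    (Set.mem_insert_of_mem _ (Set.mem_insert _ _))
  have hm3 : v3 γ T₁ g x ∈ S := Submodule.subset_span
    (Set.mem_insert_of_mem _ (Set.mem_insert_of_mem _ (Set.mem_insert _ _)))
  have hm4 : v4 γ T₃ g x ∈ S := Submodule.subset_span
    (Set.mem_insert_of_mem _ (Set.mem_insert_of_mem _ (Set.mem_insert_of_mem _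
      (Set.mem_insert _ _))))
  have hm5 : v5 γ T₁ T₃ g x ∈ S := Submodule.subset_span
    (Set.mem_insert_of_mem _ (Set.mem_insert_of_mem _ (Set.mem_insert_of_mem _
      (Set.mem_insert_of_mem _ (Set.mem_insert _ _)))))
  have hm6 : v6 γ T₁ T₃ g x ∈ S := Submodule.subset_span
    (Set.mem_insert_of_mem _ (Set.mem_insert_of_mem _ (Set.mem_insert_of_mem _
      (Set.mem_insert_of_mem _ (Set.mem_insert_of_mem _ rfl)))))
  have he1 : (((1:ℝ),(0:ℝ),(0:ℝ),(0:ℝ),(0:ℝ)) : E5) ∈ S := by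
    have h := S.smul_mem (Real.sqrt (γ * T₁ * x.1 / 2))⁻¹ hm1
    rwa [show (Real.sqrt (γ * T₁ * x.1 / 2))⁻¹ • v1 γ T₁ x
        = (((1:ℝ),(0:ℝ),(0:ℝ),(0:ℝ),(0:ℝ)) : E5) from by
      simp [v1, Prod.smul_mk, smul_eq_mul, inv_mul_cancel₀ ha.ne']
      exact (Real.sqrt_pos.2 (by positivity)).ne'] at h
  have he3 : (((0:ℝ),(0:ℝ),(1:ℝ),(0:ℝ),(0:ℝ)) : E5) ∈ S := by
    have h := S.smul_mem (Real.sqrt (γ * T₃ * x.2.2.1 / 2))⁻¹ hm2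
    rwa [show (Real.sqrt (γ * T₃ * x.2.2.1 / 2))⁻¹ • v2 γ T₃ x
        = (((0:ℝ),(0:ℝ),(1:ℝ),(0:ℝ),(0:ℝ)) : E5) from by
      simp [v2, Prod.smul_mk, smul_eq_mul, inv_mul_cancel₀ hb.ne']
      exact (Real.sqrt_pos.2 (by positivity)).ne'] at h
  have he4 : (((0:ℝ),(0:ℝ),(0:ℝ),(1:ℝ),(0:ℝ)) : E5) ∈ S := by
    have hc : Real.sqrt (γ * T₁) * g x.2.1 x.2.2.2.1 ≠ 0 :=
      (mul_pos hsg1 hgpos1).ne'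
    have h := S.smul_mem (Real.sqrt (γ * T₁) * g x.2.1 x.2.2.2.1)⁻¹ hm3
    rwa [show (Real.sqrt (γ * T₁) * g x.2.1 x.2.2.2.1)⁻¹ • v3 γ T₁ g x
        = (((0:ℝ),(0:ℝ),(0:ℝ),(1:ℝ),(0:ℝ)) : E5) from by
      simp [v3, Prod.smul_mk, smul_eq_mul, inv_mul_cancel₀ hc]
      field_simp] at h
  have he5 : (((0:ℝ),(0:ℝ),(0:ℝ),(0:ℝ),(1:ℝ)) : E5) ∈ S := by
    have hd : Real.sqrt (γ * T₃) * g x.2.1 x.2.2.2.2 ≠ 0 :=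
      (mul_pos hsg3 hgpos3).ne'
    have h := S.smul_mem (Real.sqrt (γ * T₃) * g x.2.1 x.2.2.2.2)⁻¹ hm4
    rwa [show (Real.sqrt (γ * T₃) * g x.2.1 x.2.2.2.2)⁻¹ • v4 γ T₃ g x
        = (((0:ℝ),(0:ℝ),(0:ℝ),(0:ℝ),(1:ℝ)) : E5) from by
      simp [v4, Prod.smul_mk, smul_eq_mul, inv_mul_cancel₀ hd]
      field_simp] at h
  have htrig : Real.sin x.2.2.2.1 ≠ 0 ∨ Real.cos x.2.2.2.1 ≠ 0 := by
    by_contra h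
    push_neg at h
    have hpy := Real.sin_sq_add_cos_sq x.2.2.2.1
    rw [h.1, h.2] at hpy
    norm_num at hpy
  have he2 : (((0:ℝ),(1:ℝ),(0:ℝ),(0:ℝ),(0:ℝ)) : E5) ∈ S := by
    rcases htrig with hsin | hcos
    · refine e2_of_mem S (v5 γ T₁ T₃ g x) hm5 ?_ he1 he3 he4 he5
      rw [v5_eq γ T₁ T₃ hγ hT₁ g hG hgth x hx1]
      show -2 * x.2.1 * Real.sqrt (γ * T₁ * x.1 / 2) * Real.sin x.2.2.2.1 ≠ 0
      exact mul_ne_zero (mul_ne_zero (mul_ne_zero (by norm_num) hx2.ne') ha.ne') hsin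
    · refine e2_of_mem S (v6 γ T₁ T₃ g x) hm6 ?_ he1 he3 he4 he5
      rw [v6_comp2 γ T₁ T₃ hγ hT₁ g hG hgth x hx1]
      exact mul_ne_zero (mul_ne_zero (mul_ne_zero (by norm_num) ha.ne') hx2.ne')
        (mul_ne_zero (mul_ne_zero hsg1.ne' hgpos1.ne') hcos)
  exact span_top_of_basis S he1 he2 he3 he4 he5
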